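/- arXiv:2010.12116 — 2 statements merged into one kernel-verified Lean document; each statement's English description precedes it below -/
import Mathlib

section
/- Let v : ℝⁿ → ℝⁿ be a C¹ vector field with complete flow φ_t, let f : ℝⁿ → ℝ be a C¹ function invariant under the flow (f(φ_t(x)) = f(x) for all x, t), let x₀ ∈ ℝⁿ, write x_t = φ_t(x₀), and let η : ℝⁿ → ℝⁿ be a vector field (tangent to a chosen one-dimensional foliation) such that ⟨∇f(x_t), η(x_t)⟩ > 0 for all t ∈ ℝ (the level surfaces of f are transverse to the foliation along the orbit, with consistent orientation). Let ξ_t = Dφ_t(x₀)η(x₀) be the pushforward of the foliation direction at x₀. Then ⟨∇f(x_t), ξ_t⟩ > 0 for every t; consequently, there exist no t ∈ ℝ, no c > 0, and no vector s with ⟨∇f(x_t), s⟩ = 0 such that ξ_t = −c·η(x_t) + s. (Contrapositive: if for some t the pushforward ξ_t equals −c·η(x_t) + s with c > 0 and s tangent to the level surface of f through x_t, then the orbit of x₀ does not lie on any invariant level surface of an invariant C¹ function whose gradient is positively transverse to η along the orbit.) -/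
open RealInnerProductSpace

/-! Differentiating `f ∘ φ_t = f` at `x₀` gives `⟪∇f(x_t), Dφ_t(x₀) u⟫ = ⟪∇f(x₀), u⟫` for every
`u`, so the transversality pairing of the pushed-forward direction is constant along the orbit and
equals its positive value at `t = 0`. A decomposition `ξ_t = -c η(x_t) + s` with `s` tangent to the
level surface would instead make that pairing equal to `-c ⟪∇f(x_t), η(x_t)⟫ < 0`. -/

section

variable {F : Type*} [NormedAddCommGroup F] [InnerProductSpace ℝ F]

lemma inner_gradient_eq_fderiv_apply [CompleteSpace F] (f : F → ℝ) (x y : F) :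
    ⟪gradient f x, y⟫ = fderiv ℝ f x y := by
  rw [gradient, InnerProductSpace.toDual_symm_apply]

lemma inner_gradient_fderiv_apply_of_comp_eq [CompleteSpace F] {f : F → ℝ} {g : F → F} {x : F}
    (hf : DifferentiableAt ℝ f (g x)) (hg : DifferentiableAt ℝ g x) (hfg : f ∘ g = f) (u : F) :
    ⟪gradient f (g x), fderiv ℝ g x u⟫ = ⟪gradient f x, u⟫ := by
  rw [inner_gradient_eq_fderiv_apply, inner_gradient_eq_fderiv_apply,
    ← ContinuousLinearMap.comp_apply, ← fderiv_comp x hf hg, hfg]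

lemma ne_neg_smul_add_of_inner_pos {a e ξ s : F} {c : ℝ} (hξ : 0 < ⟪a, ξ⟫) (he : 0 < ⟪a, e⟫)
    (hc : 0 < c) (hs : ⟪a, s⟫ = 0) : ξ ≠ -c • e + s := by
  rintro rfl
  rw [inner_add_right, hs, add_zero, inner_smul_right] at hξ
  nlinarith

end

theorem stmt2_general {n : ℕ}
    (φ : ℝ → EuclideanSpace ℝ (Fin n) → EuclideanSpace ℝ (Fin n))
    (hφ0 : ∀ x, φ 0 x = x)
    (hφdiff : ∀ t : ℝ, Differentiable ℝ (φ t))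
    (f : EuclideanSpace ℝ (Fin n) → ℝ) (hf : ContDiff ℝ 1 f)
    (hinv : ∀ (t : ℝ) (x : EuclideanSpace ℝ (Fin n)), f (φ t x) = f x)
    (x₀ : EuclideanSpace ℝ (Fin n))
    (η : EuclideanSpace ℝ (Fin n) → EuclideanSpace ℝ (Fin n))
    (hη : ∀ t : ℝ, 0 < ⟪gradient f (φ t x₀), η (φ t x₀)⟫) :
    (∀ t : ℝ, 0 < ⟪gradient f (φ t x₀), fderiv ℝ (φ t) x₀ (η x₀)⟫) ∧
    ¬ ∃ (t : ℝ) (c : ℝ) (s : EuclideanSpace ℝ (Fin n)),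
        0 < c ∧ ⟪gradient f (φ t x₀), s⟫ = 0 ∧
        fderiv ℝ (φ t) x₀ (η x₀) = -c • η (φ t x₀) + s := by
  have hpos (t : ℝ) : 0 < ⟪gradient f (φ t x₀), fderiv ℝ (φ t) x₀ (η x₀)⟫ := by
    rw [inner_gradient_fderiv_apply_of_comp_eq (hf.differentiable one_ne_zero _) (hφdiff t x₀)
      (funext (hinv t))]
    simpa only [hφ0] using hη 0
  refine ⟨hpos, ?_⟩
  rintro ⟨t, c, s, hc, hs, hξ⟩
  exact ne_neg_smul_add_of_inner_pos (hpos t) (hη t) hc hs hξ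

/-- Let `φ` be the (complete, differentiable) flow of a `C¹` vector field `v`,
`f` a flow-invariant `C¹` function, `x₀` a point with orbit `x_t = φ_t(x₀)`, and `η`
a vector field with `⟪∇f(x_t), η(x_t)⟫ > 0` for all `t` (the level surfaces of `f` are
transverse, with consistent orientation, to the foliation along the orbit). Then the
pushforward `ξ_t = Dφ_t(x₀) η(x₀)` satisfies `⟪∇f(x_t), ξ_t⟫ > 0` for every `t`, and
there are no `t ∈ ℝ`, `c > 0` and tangent vector `s` (i.e. `⟪∇f(x_t), s⟫ = 0`) with
`ξ_t = −c • η(x_t) + s`. -/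
theorem stmt2 {n : ℕ}
    (v : EuclideanSpace ℝ (Fin n) → EuclideanSpace ℝ (Fin n)) (hv : ContDiff ℝ 1 v)
    (φ : ℝ → EuclideanSpace ℝ (Fin n) → EuclideanSpace ℝ (Fin n))
    (hφ0 : ∀ x, φ 0 x = x)
    (hφ : ∀ (t : ℝ) (x : EuclideanSpace ℝ (Fin n)),
      HasDerivAt (fun s => φ s x) (v (φ t x)) t)
    (hφdiff : ∀ t : ℝ, Differentiable ℝ (φ t))
    (f : EuclideanSpace ℝ (Fin n) → ℝ) (hf : ContDiff ℝ 1 f)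
    (hinv : ∀ (t : ℝ) (x : EuclideanSpace ℝ (Fin n)), f (φ t x) = f x)
    (x₀ : EuclideanSpace ℝ (Fin n))
    (η : EuclideanSpace ℝ (Fin n) → EuclideanSpace ℝ (Fin n))
    (hη : ∀ t : ℝ, 0 < ⟪gradient f (φ t x₀), η (φ t x₀)⟫) :
    (∀ t : ℝ, 0 < ⟪gradient f (φ t x₀), fderiv ℝ (φ t) x₀ (η x₀)⟫) ∧
    ¬ ∃ (t : ℝ) (c : ℝ) (s : EuclideanSpace ℝ (Fin n)),
        0 < c ∧ ⟪gradient f (φ t x₀), s⟫ = 0 ∧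
        fderiv ℝ (φ t) x₀ (η x₀) = -c • η (φ t x₀) + s :=
  stmt2_general φ hφ0 hφdiff f hf hinv x₀ η hη
end

section
/- Let v : ℝ³ → ℝ³ be a C¹ vector field with complete flow φ_t, let f : ℝ³ → ℝ be a C¹ function invariant under the flow (f(φ_t(x)) = f(x) for all x, t), let x₀ ∈ ℝ³, write x_t = φ_t(x₀), and let η : ℝ³ → ℝ³ satisfy ⟨∇f(x_t), η(x_t)⟩ > 0 for all t ∈ ℝ. Let ξ_t = Dφ_t(x₀)η(x₀). Then for every time t at which v(x_t) and η(x_t) are linearly independent and the determinant det[v(x_t), ξ_t, η(x_t)] = 0 (the volume K(t) spanned by the three vectors vanishes), there exist a ∈ ℝ and b > 0 with ξ_t = a·v(x_t) + b·η(x_t); in particular the orthogonal projections π of ξ_t and η(x_t) onto the plane orthogonal to v(x_t) satisfy ⟨πξ_t, πη(x_t)⟩ > 0, so ξ_t can never equal −c·η(x_t) + d·v(x_t) with c > 0. (Contrapositive: if at some time det[v(x_t), ξ_t, η(x_t)] = 0 with v(x_t), η(x_t) independent and ⟨πξ_t, πη(x_t)⟩ < 0, then x₀ lies on no invariant level surface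 of a flow-invariant C¹ function positively transverse to η along the orbit.) -/
open RealInnerProductSpace

/-!
Invariance of `f` gives `Df(x_t) v(x_t) = 0` (differentiate `f` along the orbit) and
`Df(x_t) ξ_t = Df(x₀) η(x₀) > 0` (chain rule for `f ∘ φ_t = f`). The vanishing determinant puts
`ξ_t` in the plane spanned by the independent vectors `v(x_t)`, `η(x_t)`; applying `Df(x_t)` to
`ξ_t = a v(x_t) + b η(x_t)` leaves `b Df(x_t) η(x_t) > 0`, so `b > 0`. The projection away from
`v(x_t)` kills the `a`-term, and uniqueness of coordinates rules out a negative `η`-coefficient.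
-/

/-- Determinant of the 3×3 matrix with columns `a`, `b`, `c`. -/
noncomputable def det3 (a b c : EuclideanSpace ℝ (Fin 3)) : ℝ :=
  Matrix.det !![a 0, b 0, c 0; a 1, b 1, c 1; a 2, b 2, c 2]

/-- Orthogonal projection of `u` onto the plane orthogonal to `w`. -/
noncomputable def projAlong (w u : EuclideanSpace ℝ (Fin 3)) : EuclideanSpace ℝ (Fin 3) :=
  u - (⟪u, w⟫ / ‖w‖ ^ 2) • w

theorem exists_smul_add_smul_add_smul_eq_zero_of_det3_eq_zero
    {a b c : EuclideanSpace ℝ (Fin 3)} (h : det3 a b c = 0) :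
    ∃ u : Fin 3 → ℝ, u ≠ 0 ∧ u 0 • a + u 1 • b + u 2 • c = 0 := by
  obtain ⟨u, hu, hMu⟩ := Matrix.exists_mulVec_eq_zero_iff.mpr h
  refine ⟨u, hu, ?_⟩
  ext i
  have := congrFun hMu i
  fin_cases i <;> simpa [Matrix.mulVec, dotProduct, Fin.sum_univ_three, mul_comm] using this

theorem exists_eq_smul_add_smul_of_det3_eq_zero {a b c : EuclideanSpace ℝ (Fin 3)}
    (h : det3 a b c = 0) (hac : LinearIndependent ℝ ![a, c]) :
    ∃ α γ : ℝ, b = α • a + γ • c := by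
  obtain ⟨u, hu, hrel⟩ := exists_smul_add_smul_add_smul_eq_zero_of_det3_eq_zero h
  have hu1 : u 1 ≠ 0 := by
    intro hu1
    rw [hu1, zero_smul, add_zero] at hrel
    obtain ⟨hu0, hu2⟩ := hac.eq_zero_of_pair hrel
    exact hu (by ext i; fin_cases i <;> assumption)
  refine ⟨-(u 1)⁻¹ * u 0, -(u 1)⁻¹ * u 2, ?_⟩
  rw [← inv_smul_smul₀ hu1 b]
  linear_combination (norm := module) (u 1)⁻¹ • hrel

theorem projAlong_eq_starProjection (w u : EuclideanSpace ℝ (Fin 3)) :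
    projAlong w u = (ℝ ∙ w)ᗮ.starProjection u := by
  rw [eq_sub_of_add_eq' ((ℝ ∙ w).starProjection_add_starProjection_orthogonal u),
    Submodule.starProjection_singleton, real_inner_comm]
  rfl

theorem inner_projAlong_smul_add_smul_pos {w e : EuclideanSpace ℝ (Fin 3)}
    (hind : LinearIndependent ℝ ![w, e]) (α : ℝ) {β : ℝ} (hβ : 0 < β) :
    0 < ⟪projAlong w (α • w + β • e), projAlong w e⟫ := by
  have he : (ℝ ∙ w)ᗮ.starProjection e ≠ 0 := by
    rw [Ne, Submodule.starProjection_apply_eq_zero_iff, Submodule.orthogonal_orthogonal,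
      Submodule.mem_span_singleton]
    rintro ⟨c, rfl⟩
    exact one_ne_zero (hind.eq_zero_of_pair' (t := (1 : ℝ)) (one_smul ℝ _).symm).2
  simp only [projAlong_eq_starProjection, map_add, map_smul,
    Submodule.starProjection_orthogonalComplement_singleton_eq_zero, smul_zero, zero_add,
    real_inner_smul_left, real_inner_self_eq_norm_sq]
  positivity

section FirstIntegral

variable {E F : Type*} [NormedAddCommGroup E] [NormedSpace ℝ E]
  [NormedAddCommGroup F] [NormedSpace ℝ F] {f : E → F}

theorem fderiv_apply_eq_zero_of_comp_eq_const {γ : ℝ → E} {γ' : E} {t : ℝ} {c : F}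
    (hf : DifferentiableAt ℝ f (γ t)) (hγ : HasDerivAt γ γ' t) (hconst : ∀ s, f (γ s) = c) :
    fderiv ℝ f (γ t) γ' = 0 := by
  have hcomp : HasDerivAt (f ∘ γ) (fderiv ℝ f (γ t) γ') t := hf.hasFDerivAt.comp_hasDerivAt t hγ
  rw [show f ∘ γ = fun _ ↦ c from funext hconst] at hcomp
  exact hcomp.unique (hasDerivAt_const t c)

theorem fderiv_apply_fderiv_of_comp_eq {g : E → E} {x : E} (hf : DifferentiableAt ℝ f (g x))
    (hg : DifferentiableAt ℝ g x) (hfg : f ∘ g = f) (u : E) :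
    fderiv ℝ f (g x) (fderiv ℝ g x u) = fderiv ℝ f x u := by
  conv_rhs => rw [← hfg, fderiv_comp x hf hg]
  rfl

end FirstIntegral

theorem stmt3_general
    (v : EuclideanSpace ℝ (Fin 3) → EuclideanSpace ℝ (Fin 3))
    (φ : ℝ → EuclideanSpace ℝ (Fin 3) → EuclideanSpace ℝ (Fin 3))
    (hφ0 : ∀ x, φ 0 x = x)
    (hφ : ∀ (t : ℝ) (x : EuclideanSpace ℝ (Fin 3)),
      HasDerivAt (fun s => φ s x) (v (φ t x)) t)
    (hφdiff : ∀ t : ℝ, Differentiable ℝ (φ t))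
    (f : EuclideanSpace ℝ (Fin 3) → ℝ) (hf : ContDiff ℝ 1 f)
    (hinv : ∀ (t : ℝ) (x : EuclideanSpace ℝ (Fin 3)), f (φ t x) = f x)
    (x₀ : EuclideanSpace ℝ (Fin 3))
    (η : EuclideanSpace ℝ (Fin 3) → EuclideanSpace ℝ (Fin 3))
    (htrans : ∀ t : ℝ, 0 < ⟪gradient f (φ t x₀), η (φ t x₀)⟫)
    (t : ℝ)
    (hind : LinearIndependent ℝ ![v (φ t x₀), η (φ t x₀)])
    (hdet : det3 (v (φ t x₀)) (fderiv ℝ (φ t) x₀ (η x₀)) (η (φ t x₀)) = 0) :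
    (∃ a b : ℝ, 0 < b ∧
        fderiv ℝ (φ t) x₀ (η x₀) = a • v (φ t x₀) + b • η (φ t x₀)) ∧
    0 < ⟪projAlong (v (φ t x₀)) (fderiv ℝ (φ t) x₀ (η x₀)),
          projAlong (v (φ t x₀)) (η (φ t x₀))⟫ ∧
    ¬ ∃ c d : ℝ, 0 < c ∧
        fderiv ℝ (φ t) x₀ (η x₀) = -c • η (φ t x₀) + d • v (φ t x₀) := by
  have hfd : Differentiable ℝ f := hf.differentiable one_ne_zero
  obtain ⟨α, β, hξ⟩ := exists_eq_smul_add_smul_of_det3_eq_zero hdet hind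
  have hv : fderiv ℝ f (φ t x₀) (v (φ t x₀)) = 0 :=
    fderiv_apply_eq_zero_of_comp_eq_const (hfd _) (hφ t x₀) (fun s ↦ hinv s x₀)
  have hξpos : 0 < fderiv ℝ f (φ t x₀) (fderiv ℝ (φ t) x₀ (η x₀)) := by
    rw [fderiv_apply_fderiv_of_comp_eq (hfd _) (hφdiff t x₀) (funext (hinv t)),
      ← inner_gradient_left]
    simpa only [hφ0] using htrans 0
  have hη : 0 < fderiv ℝ f (φ t x₀) (η (φ t x₀)) := by
    simpa only [inner_gradient_left] using htrans t
  have hβ : 0 < β := by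
    rw [hξ, map_add, map_smul, map_smul, hv, smul_zero, zero_add, smul_eq_mul] at hξpos
    exact pos_of_mul_pos_left hξpos hη.le
  refine ⟨⟨α, β, hβ, hξ⟩, hξ ▸ inner_projAlong_smul_add_smul_pos hind α hβ, ?_⟩
  rintro ⟨c, d, hc, hξ'⟩
  obtain ⟨-, hβc⟩ := hind.eq_of_pair (hξ.symm.trans (hξ'.trans (add_comm _ _)))
  linarith

/-- For the flow `φ` of a `C¹` vector field `v` on `ℝ³`, a flow-invariant `C¹`
function `f`, a point `x₀` with orbit `x_t = φ_t(x₀)`, and a field `η` positively transverse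
to the level sets of `f` along the orbit, let `ξ_t = Dφ_t(x₀) η(x₀)`. Then for every time `t`
at which `v(x_t)`, `η(x_t)` are linearly independent and `det[v(x_t), ξ_t, η(x_t)] = 0`,
there are `a ∈ ℝ`, `b > 0` with `ξ_t = a • v(x_t) + b • η(x_t)`; in particular the orthogonal
projections onto the plane orthogonal to `v(x_t)` satisfy `⟪πξ_t, πη(x_t)⟫ > 0`, so `ξ_t`
can never equal `−c • η(x_t) + d • v(x_t)` with `c > 0`. -/
theorem stmt3
    (v : EuclideanSpace ℝ (Fin 3) → EuclideanSpace ℝ (Fin 3)) (hv : ContDiff ℝ 1 v)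
    (φ : ℝ → EuclideanSpace ℝ (Fin 3) → EuclideanSpace ℝ (Fin 3))
    (hφ0 : ∀ x, φ 0 x = x)
    (hφ : ∀ (t : ℝ) (x : EuclideanSpace ℝ (Fin 3)),
      HasDerivAt (fun s => φ s x) (v (φ t x)) t)
    (hφdiff : ∀ t : ℝ, Differentiable ℝ (φ t))
    (f : EuclideanSpace ℝ (Fin 3) → ℝ) (hf : ContDiff ℝ 1 f)
    (hinv : ∀ (t : ℝ) (x : EuclideanSpace ℝ (Fin 3)), f (φ t x) = f x)
    (x₀ : EuclideanSpace ℝ (Fin 3))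
    (η : EuclideanSpace ℝ (Fin 3) → EuclideanSpace ℝ (Fin 3))
    (htrans : ∀ t : ℝ, 0 < ⟪gradient f (φ t x₀), η (φ t x₀)⟫)
    (t : ℝ)
    (hind : LinearIndependent ℝ ![v (φ t x₀), η (φ t x₀)])
    (hdet : det3 (v (φ t x₀)) (fderiv ℝ (φ t) x₀ (η x₀)) (η (φ t x₀)) = 0) :
    (∃ a b : ℝ, 0 < b ∧
        fderiv ℝ (φ t) x₀ (η x₀) = a • v (φ t x₀) + b • η (φ t x₀)) ∧
    0 < ⟪projAlong (v (φ t x₀)) (fderiv ℝ (φ t) x₀ (η x₀)),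
          projAlong (v (φ t x₀)) (η (φ t x₀))⟫ ∧
    ¬ ∃ c d : ℝ, 0 < c ∧
        fderiv ℝ (φ t) x₀ (η x₀) = -c • η (φ t x₀) + d • v (φ t x₀) :=
  stmt3_general v φ hφ0 hφ hφdiff f hf hinv x₀ η htrans t hind hdet
end
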